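/- arXiv:0711.3032 — 4 statements merged into one kernel-verified Lean document; each statement's English description precedes it below -/
import Mathlib

section
/- Let H be a real Hilbert space, B a bounded symmetric bilinear form on H represented by a self-adjoint Fredholm operator T, and Z ⊆ H a subspace on which B vanishes identically (B-isotropic) such that Z ∩ Ker(B) = {0}. Then the Morse index of B (the dimension of a maximal subspace on which B is negative definite) is at least dim(Z). -/
/-!
A nonzero `z ∈ Z` has `T z ≠ 0`, and pushing `z` a little in the direction `-T z` makes `B`
negative: as `B z z = 0`, the first-order term of `B (z - t • T z) (z - t • T z)` is
`-2 t ‖T z‖²`, while the second-order term is at most `t² ‖T‖ ‖T z‖²`. For `t = (1 + ‖T‖)⁻¹`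
the linear map `z ↦ z - t • T z` thus sends `Z ∖ {0}` into the negative cone of `B`, so it
embeds `Z` into a negative definite subspace.
-/

open scoped RealInnerProductSpace

/-- The Morse index of a bounded symmetric bilinear form `B`: the supremum of the
dimensions of subspaces on which `B` is negative definite. -/
noncomputable def morseIndex {H : Type*} [NormedAddCommGroup H] [InnerProductSpace ℝ H]
    (B : H →L[ℝ] H →L[ℝ] ℝ) : Cardinal :=
  ⨆ W : {W : Submodule ℝ H // ∀ x ∈ W, x ≠ 0 → B x x < 0}, Module.rank ℝ W.1

universe u

section MorseIndex

variable {H : Type u} [NormedAddCommGroup H] [InnerProductSpace ℝ H] (B : H →L[ℝ] H →L[ℝ] ℝ)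

theorem rank_le_morseIndex (W : Submodule ℝ H) (hW : ∀ x ∈ W, x ≠ 0 → B x x < 0) :
    Module.rank ℝ W ≤ morseIndex B := by
  have hbdd : BddAbove (Set.range fun W : {W : Submodule ℝ H // ∀ x ∈ W, x ≠ 0 → B x x < 0} =>
      Module.rank ℝ W.1) := ⟨Module.rank ℝ H, by rintro _ ⟨W', rfl⟩; exact Submodule.rank_le _⟩
  exact le_ciSup hbdd ⟨W, hW⟩

theorem rank_le_morseIndex_of_linearMap {V : Type u} [AddCommGroup V] [Module ℝ V]
    (f : V →ₗ[ℝ] H) (hf : ∀ v, v ≠ 0 → B (f v) (f v) < 0) :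
    Module.rank ℝ V ≤ morseIndex B := by
  have hinj : Function.Injective f := by
    rw [← LinearMap.ker_eq_bot, LinearMap.ker_eq_bot']
    intro v hv
    by_contra hv0
    simpa [hv] using hf v hv0
  rw [(LinearEquiv.ofInjective f hinj).rank_eq]
  refine rank_le_morseIndex B _ ?_
  rintro _ ⟨v, rfl⟩ hv
  exact hf v (by rintro rfl; exact hv (map_zero f))

end MorseIndex

theorem inner_apply_sub_smul_apply_neg {H : Type*} [NormedAddCommGroup H]
    [InnerProductSpace ℝ H] {T : H →L[ℝ] H} (hT : (T : H →ₗ[ℝ] H).IsSymmetric) {z : H}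
    (hz : ⟪T z, z⟫ = 0) (hTz : T z ≠ 0) {t : ℝ} (ht : 0 < t) (htT : t * ‖T‖ < 2) :
    ⟪T (z - t • T z), z - t • T z⟫ < 0 := by
  have hTT : ⟪T (T z), T z⟫ ≤ ‖T‖ * ‖T z‖ ^ 2 :=
    calc ⟪T (T z), T z⟫ ≤ ‖T (T z)‖ * ‖T z‖ := real_inner_le_norm _ _
      _ ≤ ‖T‖ * ‖T z‖ * ‖T z‖ := by gcongr; exact T.le_opNorm _
      _ = ‖T‖ * ‖T z‖ ^ 2 := by ring
  have hTTz : ⟪T (T z), z⟫ = ‖T z‖ ^ 2 := by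
    rw [show ⟪T (T z), z⟫ = ⟪T z, T z⟫ from hT (T z) z, real_inner_self_eq_norm_sq]
  have hTz_sq : 0 < ‖T z‖ ^ 2 := by positivity
  calc ⟪T (z - t • T z), z - t • T z⟫ = -2 * t * ‖T z‖ ^ 2 + t ^ 2 * ⟪T (T z), T z⟫ := by
        simp only [map_sub, map_smul, inner_sub_left, inner_sub_right, real_inner_smul_left,
          real_inner_smul_right, hz, hTTz, real_inner_self_eq_norm_sq]
        ring
    _ ≤ -2 * t * ‖T z‖ ^ 2 + t ^ 2 * (‖T‖ * ‖T z‖ ^ 2) := by gcongr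
    _ = t * ‖T z‖ ^ 2 * (t * ‖T‖ - 2) := by ring
    _ < 0 := mul_neg_of_pos_of_neg (by positivity) (by linarith)

theorem stmt0_general {H : Type*} [NormedAddCommGroup H] [InnerProductSpace ℝ H]
    (B : H →L[ℝ] H →L[ℝ] ℝ) (T : H →L[ℝ] H)
    (hrep : ∀ x y, B x y = ⟪T x, y⟫)
    (hsa : ∀ x y, ⟪T x, y⟫ = ⟪x, T y⟫)
    (Z : Submodule ℝ H)
    (hiso : ∀ x ∈ Z, ∀ y ∈ Z, B x y = 0)
    (hZker : ∀ x ∈ Z, (∀ y, B x y = 0) → x = 0) :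
    Module.rank ℝ Z ≤ morseIndex B := by
  set t : ℝ := (1 + ‖T‖)⁻¹
  have ht : 0 < t := by positivity
  have htT : t * ‖T‖ < 2 := by
    have : t * (1 + ‖T‖) = 1 := inv_mul_cancel₀ (by positivity)
    nlinarith
  refine rank_le_morseIndex_of_linearMap B
    (Z.subtype - t • ((T : H →ₗ[ℝ] H) ∘ₗ Z.subtype)) fun z hz => ?_
  have hTz : T z ≠ 0 := fun h =>
    hz (Subtype.ext (hZker z z.2 fun y => by rw [hrep, h, inner_zero_left]))
  rw [hrep]
  exact inner_apply_sub_smul_apply_neg hsa (by rw [← hrep]; exact hiso z z.2 z z.2) hTz ht htT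

/-- if `B` is a bounded symmetric bilinear form represented by a self-adjoint
Fredholm operator `T`, and `Z` is a `B`-isotropic subspace with `Z ∩ Ker B = {0}`, then
`n₋(B) ≥ dim Z`. -/
theorem stmt0 {H : Type*} [NormedAddCommGroup H] [InnerProductSpace ℝ H] [CompleteSpace H]
    (B : H →L[ℝ] H →L[ℝ] ℝ) (T : H →L[ℝ] H)
    (hrep : ∀ x y, B x y = ⟪T x, y⟫)
    (hsa : ∀ x y, ⟪T x, y⟫ = ⟪x, T y⟫)
    (hker : FiniteDimensional ℝ (LinearMap.ker (T : H →ₗ[ℝ] H)))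
    (hclosed : IsClosed (LinearMap.range (T : H →ₗ[ℝ] H) : Set H))
    (hcoker : FiniteDimensional ℝ (H ⧸ LinearMap.range (T : H →ₗ[ℝ] H)))
    (Z : Submodule ℝ H)
    (hiso : ∀ x ∈ Z, ∀ y ∈ Z, B x y = 0)
    (hZker : ∀ x ∈ Z, (∀ y, B x y = 0) → x = 0) :
    Module.rank ℝ Z ≤ morseIndex B :=
  stmt0_general B T hrep hsa Z hiso hZker
end

section
/- Let H be a real Hilbert space and B a bounded symmetric bilinear form on H. Then B is essentially positive if and only if there exists a closed subspace V ⊆ H of finite codimension such that inf{B(x,x) : x ∈ V, ‖x‖ = 1} > 0. -/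
open scoped RealInnerProductSpace

/-- Essentially positive bilinear form: represented by a positive self-adjoint
isomorphism plus a compact self-adjoint operator. -/
def IsEssPos {E : Type*} [NormedAddCommGroup E] [InnerProductSpace ℝ E]
    (B : E → E → ℝ) : Prop :=
  ∃ P K : E →L[ℝ] E,
    (∀ x y, ⟪P x, y⟫ = ⟪x, P y⟫) ∧ Function.Bijective P ∧
    (∀ x, x ≠ 0 → 0 < ⟪P x, x⟫) ∧
    (∀ x y, ⟪K x, y⟫ = ⟪x, K y⟫) ∧ IsCompactOperator K ∧
    (∀ x y, B x y = ⟪(P + K) x, y⟫)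

/-!
A positive self-adjoint isomorphism `P` is coercive, by Cauchy–Schwarz for `⟪P ·, ·⟫` and the
bounded inverse. A compact `K` satisfies `|⟪K x, x⟫| < ε` on the unit ball of the orthogonal
complement of the span of a finite `ε`-net of `K (closedBall 0 1)`, so `P + K` stays coercive on
that finite-codimensional subspace. Conversely, if the operator `T` of `B` is coercive with
constant `c` on `V` and `Q` is the orthogonal projection onto `V`, then `P = Q T Q + c (1 - Q)` is
coercive and self-adjoint, hence an isomorphism, and `T - P` is compact since `1 - Q` has finite
rank.
-/

section RCLike

variable {𝕜 H : Type*} [RCLike 𝕜] [NormedAddCommGroup H] [InnerProductSpace 𝕜 H]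

theorem Submodule.finiteDimensional_quotient_orthogonal (E : Submodule 𝕜 H)
    [FiniteDimensional 𝕜 E] : FiniteDimensional 𝕜 (H ⧸ Eᗮ) :=
  (Submodule.quotientEquivOfIsCompl Eᗮ E
    (Submodule.isCompl_orthogonal E).symm).symm.finiteDimensional

theorem Submodule.finiteDimensional_orthogonal_of_quotient (V : Submodule 𝕜 H)
    [V.HasOrthogonalProjection] [FiniteDimensional 𝕜 (H ⧸ V)] : FiniteDimensional 𝕜 Vᗮ :=
  (Submodule.quotientEquivOfIsCompl V Vᗮ (Submodule.isCompl_orthogonal V)).finiteDimensional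

theorem Submodule.isCompactOperator_starProjection (U : Submodule 𝕜 H) [FiniteDimensional 𝕜 U] :
    IsCompactOperator U.starProjection :=
  (isCompactOperator_of_locallyCompactSpace_dom U.orthogonalProjectionOnto).clm_comp U.subtypeL

theorem Submodule.isCompactOperator_sub_conj_starProjection (V : Submodule 𝕜 H)
    [V.HasOrthogonalProjection] [FiniteDimensional 𝕜 Vᗮ] (T : H →L[𝕜] H) :
    IsCompactOperator (T - V.starProjection ∘L T ∘L V.starProjection) := by
  have hR := Vᗮ.isCompactOperator_starProjection
  have hsplit : T - V.starProjection ∘L T ∘L V.starProjection =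
      Vᗮ.starProjection ∘L T + V.starProjection ∘L T ∘L Vᗮ.starProjection := by
    ext x
    simp only [Submodule.starProjection_orthogonal, sub_apply, add_apply,
      ContinuousLinearMap.comp_apply, ContinuousLinearMap.id_apply, map_sub]
    abel
  rw [hsplit]
  exact (hR.comp_clm T).add (hR.clm_comp (V.starProjection ∘L T))

end RCLike

section Real

variable {H : Type*} [NormedAddCommGroup H] [InnerProductSpace ℝ H]

theorem ContinuousLinearMap.norm_apply_sq_le_opNorm_mul_inner (P : H →L[ℝ] H)
    (hP : (P : H →ₗ[ℝ] H).IsSymmetric) (hnonneg : ∀ x, 0 ≤ ⟪P x, x⟫) (x : H) :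
    ‖P x‖ ^ 2 ≤ ‖P‖ * ⟪P x, x⟫ := by
  -- Cauchy–Schwarz for the semi-inner product `⟪P ·, ·⟫` at `x` and `P x`
  have hCS := LinearMap.BilinForm.apply_mul_apply_le_of_forall_zero_le
    ((innerₗ H).comp (P : H →ₗ[ℝ] H)) hnonneg x (P x)
  simp only [LinearMap.comp_apply, innerₗ_apply_apply, ContinuousLinearMap.coe_coe] at hCS
  have hsq : ⟪P (P x), x⟫ = ‖P x‖ ^ 2 := by
    rw [← real_inner_self_eq_norm_sq]; exact hP (P x) x
  rw [hsq, real_inner_self_eq_norm_sq] at hCS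
  have hPPx : ⟪P (P x), P x⟫ ≤ ‖P‖ * ‖P x‖ ^ 2 :=
    calc ⟪P (P x), P x⟫ ≤ ‖P (P x)‖ * ‖P x‖ := real_inner_le_norm _ _
      _ ≤ ‖P‖ * ‖P x‖ * ‖P x‖ := by gcongr; exact P.le_opNorm _
      _ = ‖P‖ * ‖P x‖ ^ 2 := by ring
  rcases (norm_nonneg (P x)).eq_or_lt with hPx | hPx
  · rw [← hPx]
    simpa using mul_nonneg (norm_nonneg P) (hnonneg x)
  · refine le_of_mul_le_mul_left ?_ (pow_pos hPx 2)
    nlinarith [hnonneg x]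

theorem ContinuousLinearMap.exists_pos_mul_norm_sq_le_inner [CompleteSpace H] (P : H →L[ℝ] H)
    (hP : (P : H →ₗ[ℝ] H).IsSymmetric) (hnonneg : ∀ x, 0 ≤ ⟪P x, x⟫)
    (hbij : Function.Bijective P) : ∃ c, 0 < c ∧ ∀ x, c * ‖x‖ ^ 2 ≤ ⟪P x, x⟫ := by
  set e := ContinuousLinearEquiv.ofBijective P (LinearMap.ker_eq_bot.mpr hbij.1)
    (LinearMap.range_eq_top.mpr hbij.2)
  have hlower : ∀ x, ‖x‖ ≤ ‖(e.symm : H →L[ℝ] H)‖ * ‖P x‖ :=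
    e.antilipschitz.le_mul_norm (map_zero e)
  set M := ‖(e.symm : H →L[ℝ] H)‖
  refine ⟨(M ^ 2 * ‖P‖ + 1)⁻¹, by positivity, fun x => ?_⟩
  rw [inv_mul_le_iff₀ (by positivity)]
  calc ‖x‖ ^ 2 ≤ (M * ‖P x‖) ^ 2 := by gcongr; exact hlower x
    _ = M ^ 2 * ‖P x‖ ^ 2 := by ring
    _ ≤ M ^ 2 * (‖P‖ * ⟪P x, x⟫) := by
      gcongr; exact P.norm_apply_sq_le_opNorm_mul_inner hP hnonneg x
    _ ≤ (M ^ 2 * ‖P‖ + 1) * ⟪P x, x⟫ := by nlinarith [hnonneg x]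

theorem IsCompactOperator.exists_finiteDimensional_abs_inner_lt {K : H →L[ℝ] H}
    (hK : IsCompactOperator K) {ε : ℝ} (hε : 0 < ε) :
    ∃ E : Submodule ℝ H, FiniteDimensional ℝ E ∧ ∀ x ∈ Eᗮ, ‖x‖ ≤ 1 → |⟪K x, x⟫| < ε := by
  obtain ⟨C, hC, hKC⟩ := IsCompactOperator.image_closedBall_subset_compact
    (f := (K : H →ₗ[ℝ] H)) hK 1
  obtain ⟨t, ht, hcover⟩ := Metric.totallyBounded_iff.mp hC.totallyBounded ε hε
  refine ⟨Submodule.span ℝ t, FiniteDimensional.span_of_finite ℝ ht, fun x hx hx1 => ?_⟩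
  obtain ⟨y, hyt, hy⟩ := Set.mem_iUnion₂.mp (hcover (hKC ⟨x, by simpa using hx1, rfl⟩))
  have hyx : ⟪y, x⟫ = 0 := (Submodule.mem_orthogonal _ x).mp hx y (Submodule.subset_span hyt)
  calc |⟪K x, x⟫| = |⟪K x - y, x⟫| := by rw [inner_sub_left, hyx, sub_zero]
    _ ≤ ‖K x - y‖ * ‖x‖ := abs_real_inner_le_norm _ _
    _ ≤ ‖K x - y‖ := mul_le_of_le_one_right (norm_nonneg _) hx1
    _ < ε := by rwa [Metric.mem_ball, dist_eq_norm] at hy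

theorem IsEssPos.exists_forall_norm_eq_one_le [CompleteSpace H] {B : H → H → ℝ}
    (hB : IsEssPos B) :
    ∃ V : Submodule ℝ H, IsClosed (V : Set H) ∧ FiniteDimensional ℝ (H ⧸ V) ∧
      ∃ c : ℝ, 0 < c ∧ ∀ x ∈ V, ‖x‖ = 1 → c ≤ B x x := by
  obtain ⟨P, K, hPsym, hPbij, hPpos, -, hK, hBPK⟩ := hB
  have hPnonneg : ∀ x, 0 ≤ ⟪P x, x⟫ := fun x => by
    rcases eq_or_ne x 0 with rfl | hx
    · simp
    · exact (hPpos x hx).le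
  obtain ⟨c, hc, hPc⟩ := P.exists_pos_mul_norm_sq_le_inner hPsym hPnonneg hPbij
  obtain ⟨E, hE, hKE⟩ := hK.exists_finiteDimensional_abs_inner_lt (half_pos hc)
  refine ⟨Eᗮ, Submodule.isClosed_orthogonal E, E.finiteDimensional_quotient_orthogonal, c / 2,
    half_pos hc, fun x hx hx1 => ?_⟩
  have hPx := hPc x
  have hKx := (abs_lt.mp (hKE x hx hx1.le)).1
  rw [hx1] at hPx
  rw [hBPK, add_apply, inner_add_left]
  linarith

theorem Submodule.mul_norm_sq_le_inner_of_forall_norm_eq_one {T : H →L[ℝ] H}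
    {V : Submodule ℝ H} {c : ℝ} (h : ∀ x ∈ V, ‖x‖ = 1 → c ≤ ⟪T x, x⟫) {x : H} (hx : x ∈ V) :
    c * ‖x‖ ^ 2 ≤ ⟪T x, x⟫ := by
  rcases eq_or_ne x 0 with rfl | hx0
  · simp
  have hnx : 0 < ‖x‖ := norm_pos_iff.mpr hx0
  have hu := h (‖x‖⁻¹ • x) (V.smul_mem _ hx) (by rw [norm_smul, norm_inv, norm_norm,
    inv_mul_cancel₀ hnx.ne'])
  rw [map_smul, real_inner_smul_left, real_inner_smul_right] at hu
  calc c * ‖x‖ ^ 2 ≤ ‖x‖⁻¹ * (‖x‖⁻¹ * ⟪T x, x⟫) * ‖x‖ ^ 2 := by gcongr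
    _ = ⟪T x, x⟫ := by field_simp

open ContinuousLinearMap in
theorem isEssPos_inner_of_forall_norm_eq_one_le [CompleteSpace H] {T : H →L[ℝ] H}
    (hT : IsSelfAdjoint T) {V : Submodule ℝ H} (hV : IsClosed (V : Set H))
    [FiniteDimensional ℝ (H ⧸ V)] {c : ℝ} (hc : 0 < c)
    (hTV : ∀ x ∈ V, ‖x‖ = 1 → c ≤ ⟪T x, x⟫) : IsEssPos (fun x y => ⟪T x, y⟫) := by
  have : CompleteSpace V := hV.completeSpace_coe
  have : FiniteDimensional ℝ Vᗮ := V.finiteDimensional_orthogonal_of_quotient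
  set Q := V.starProjection
  set R := Vᗮ.starProjection
  set P := Q ∘L T ∘L Q + c • R
  have hP : IsSelfAdjoint P :=
    (hT.conj_starProjection V).add ((IsSelfAdjoint.all c).smul (isSelfAdjoint_starProjection _))
  have hPc : ∀ x, c * ‖x‖ ^ 2 ≤ ⟪P x, x⟫ := by
    intro x
    have hQx : c * ‖Q x‖ ^ 2 ≤ ⟪T (Q x), Q x⟫ :=
      V.mul_norm_sq_le_inner_of_forall_norm_eq_one hTV (V.starProjection_apply_mem x)
    have hRx : ⟪R x, x⟫ = ‖R x‖ ^ 2 := by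
      have h := Vᗮ.re_inner_starProjection_eq_normSq x
      rw [RCLike.re_to_real] at h
      exact h
    have hPx : ⟪P x, x⟫ = ⟪T (Q x), Q x⟫ + c * ‖R x‖ ^ 2 := by
      rw [add_apply, inner_add_left, comp_apply, comp_apply,
        V.inner_starProjection_left_eq_right, smul_apply, real_inner_smul_left, hRx]
    rw [hPx, V.norm_sq_eq_add_norm_sq_starProjection x]
    nlinarith
  have hK : IsCompactOperator (T - P) := by
    rw [sub_add_eq_sub_sub]
    exact (V.isCompactOperator_sub_conj_starProjection T).sub
      (Vᗮ.isCompactOperator_starProjection.smul c)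
  refine ⟨P, T - P, isSelfAdjoint_iff_isSymmetric.mp hP, ?_, ?_,
    isSelfAdjoint_iff_isSymmetric.mp (hT.sub hP), hK, by simp⟩
  · have hunit := isUnit_of_forall_le_norm_inner_map P (c := ⟨c, hc.le⟩) hc fun x => by
      rw [mul_comm, Real.norm_eq_abs]; exact (hPc x).trans (le_abs_self _)
    exact isUnit_iff_bijective.mp hunit
  · exact fun x hx => (mul_pos hc (pow_pos (norm_pos_iff.mpr hx) 2)).trans_le (hPc x)

end Real

/-- `B` is essentially positive iff there is a closed finite-codimensional
subspace `V` with `inf { B(x,x) : x ∈ V, ‖x‖ = 1 } > 0`. -/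
theorem stmt4 {H : Type*} [NormedAddCommGroup H] [InnerProductSpace ℝ H] [CompleteSpace H]
    (B : H →L[ℝ] H →L[ℝ] ℝ) (hsym : ∀ x y, B x y = B y x) :
    IsEssPos (fun x y => B x y) ↔
      ∃ V : Submodule ℝ H, IsClosed (V : Set H) ∧ FiniteDimensional ℝ (H ⧸ V) ∧
        ∃ c : ℝ, 0 < c ∧ ∀ x ∈ V, ‖x‖ = 1 → c ≤ B x x := by
  refine ⟨IsEssPos.exists_forall_norm_eq_one_le, ?_⟩
  rintro ⟨V, hV, hVfin, c, hc, hcV⟩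
  set T := InnerProductSpace.continuousLinearMapOfBilin B
  have hTB : ∀ x y, ⟪T x, y⟫ = B x y := InnerProductSpace.continuousLinearMapOfBilin_apply B
  have hT : IsSelfAdjoint T := ContinuousLinearMap.isSelfAdjoint_iff_isSymmetric.mpr
    fun x y => by rw [ContinuousLinearMap.coe_coe, hTB, hsym, ← hTB, real_inner_comm]
  simp_rw [← hTB] at hcV ⊢
  exact isEssPos_inner_of_forall_norm_eq_one_le hT hV hc hcV
end

section
/- The set A = {(B,V) : B a bounded symmetric bilinear form on H, V a closed subspace of H, such that B|_{V×V} is essentially positive} is open in B_s(H) × G(H), where B_s(H) carries the operator-norm topology via representing operators and G(H) is the Grassmannian of closed subspaces with the metric dist(X,Y) = ‖P_X − P_Y‖. -/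
/-!
Essential positivity is the same as coercivity up to a compact symmetric perturbation,
`c * ‖x‖ ^ 2 ≤ B x x + ⟪K x, x⟫`: a positive definite isomorphism is coercive (Cauchy–Schwarz
for the form `⟪Q x, y⟫` together with the open mapping theorem), and conversely a coercive
symmetric operator is an isomorphism. If `V' = range P'` is close to `V = range P`, the map
`J = P|_{V'} : V' → V` moves each vector `x` by at most `‖P' - P‖ * ‖x‖`, so the estimate for `T`
on `V` pulls back along `J` to an estimate for `T'` on `V'`, with the compact perturbation
`J† K J` and the constant `c / 8`.
-/

open scoped RealInnerProductSpace

section InnerProductSpace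

variable {E : Type*} [NormedAddCommGroup E] [InnerProductSpace ℝ E]

namespace ContinuousLinearMap

theorem IsPositive.inner_map_mul_inner_map_le {Q : E →L[ℝ] E} (hQ : Q.IsPositive) (x y : E) :
    ⟪Q x, y⟫ * ⟪Q x, y⟫ ≤ ⟪Q x, x⟫ * ⟪Q y, y⟫ := by
  have hyx : ⟪Q y, x⟫ = ⟪Q x, y⟫ := by
    rw [hQ.inner_left_eq_inner_right, real_inner_comm]
  have hquad : ∀ t : ℝ, 0 ≤ ⟪Q y, y⟫ * (t * t) + 2 * ⟪Q x, y⟫ * t + ⟪Q x, x⟫ := fun t => by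
    have h := hQ.inner_nonneg_left (x + t • y)
    simp only [map_add, map_smul, inner_add_left, inner_add_right, real_inner_smul_left,
      real_inner_smul_right, hyx] at h
    linarith
  have := discrim_le_zero hquad
  rw [discrim] at this
  linarith

theorem IsPositive.norm_apply_sq_le {Q : E →L[ℝ] E} (hQ : Q.IsPositive) (x : E) :
    ‖Q x‖ ^ 2 ≤ ‖Q‖ * ⟪Q x, x⟫ := by
  have hcs := hQ.inner_map_mul_inner_map_le x (Q x)
  have hQQ : ⟪Q (Q x), Q x⟫ ≤ ‖Q‖ * ‖Q x‖ ^ 2 := by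
    calc ⟪Q (Q x), Q x⟫ ≤ ‖Q (Q x)‖ * ‖Q x‖ := real_inner_le_norm _ _
      _ ≤ ‖Q‖ * ‖Q x‖ * ‖Q x‖ := by gcongr; exact Q.le_opNorm _
      _ = ‖Q‖ * ‖Q x‖ ^ 2 := by ring
  rw [real_inner_self_eq_norm_sq] at hcs
  rcases (sq_nonneg ‖Q x‖).eq_or_lt with h0 | hpos
  · rw [← h0]
    exact mul_nonneg (norm_nonneg Q) (hQ.inner_nonneg_left x)
  · nlinarith [mul_le_mul_of_nonneg_left hQQ (hQ.inner_nonneg_left x)]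

theorem IsPositive.exists_mul_norm_sq_le_of_bijective [CompleteSpace E] {Q : E →L[ℝ] E}
    (hQ : Q.IsPositive) (hbij : Function.Bijective Q) :
    ∃ c > 0, ∀ x, c * ‖x‖ ^ 2 ≤ ⟪Q x, x⟫ := by
  obtain ⟨-, C, hC⟩ := (bijective_iff_dense_range_and_antilipschitz Q).mp hbij
  have hd : (0 : ℝ) < ((C : ℝ) + 1) ^ 2 * (‖Q‖ + 1) := by positivity
  refine ⟨(((C : ℝ) + 1) ^ 2 * (‖Q‖ + 1))⁻¹, by positivity, fun x => ?_⟩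
  rw [inv_mul_le_iff₀ hd]
  have hx : ‖x‖ ≤ ((C : ℝ) + 1) * ‖Q x‖ := by
    have := hC.le_mul_dist x 0
    simp only [dist_zero_right, map_zero] at this
    nlinarith [norm_nonneg (Q x)]
  have hQx := hQ.norm_apply_sq_le x
  have hnn := hQ.inner_nonneg_left x
  calc ‖x‖ ^ 2 ≤ ((C : ℝ) + 1) ^ 2 * ‖Q x‖ ^ 2 := by
        rw [← mul_pow]; gcongr
    _ ≤ ((C : ℝ) + 1) ^ 2 * (‖Q‖ * ⟪Q x, x⟫) := by gcongr
    _ ≤ ((C : ℝ) + 1) ^ 2 * (‖Q‖ + 1) * ⟪Q x, x⟫ := by nlinarith [sq_nonneg ((C : ℝ) + 1)]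

end ContinuousLinearMap

theorem abs_inner_map_self_sub_inner_map_self_le (T : E →L[ℝ] E) (u v : E) :
    |⟪T u, u⟫ - ⟪T v, v⟫| ≤ ‖T‖ * (‖u‖ + ‖v‖) * ‖u - v‖ := by
  have hsplit : ⟪T u, u⟫ - ⟪T v, v⟫ = ⟪T (u - v), u⟫ + ⟪T v, u - v⟫ := by
    simp only [map_sub, inner_sub_left, inner_sub_right]; ring
  rw [hsplit]
  calc |⟪T (u - v), u⟫ + ⟪T v, u - v⟫| ≤ |⟪T (u - v), u⟫| + |⟪T v, u - v⟫| := abs_add_le _ _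
    _ ≤ ‖T (u - v)‖ * ‖u‖ + ‖T v‖ * ‖u - v‖ := by
        gcongr <;> exact abs_real_inner_le_norm _ _
    _ ≤ ‖T‖ * ‖u - v‖ * ‖u‖ + ‖T‖ * ‖v‖ * ‖u - v‖ := by
        gcongr <;> exact T.le_opNorm _
    _ = ‖T‖ * (‖u‖ + ‖v‖) * ‖u - v‖ := by ring

theorem abs_inner_map_self_sub_le_opNorm_sub_mul (T T' : E →L[ℝ] E) (u : E) :
    |⟪T' u, u⟫ - ⟪T u, u⟫| ≤ ‖T' - T‖ * ‖u‖ ^ 2 := by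
  rw [← inner_sub_left, ← sub_apply]
  calc |⟪(T' - T) u, u⟫| ≤ ‖(T' - T) u‖ * ‖u‖ := abs_real_inner_le_norm _ _
    _ ≤ ‖T' - T‖ * ‖u‖ * ‖u‖ := by gcongr; exact (T' - T).le_opNorm u
    _ = ‖T' - T‖ * ‖u‖ ^ 2 := by ring

/-- Passing from `v` to `u` and from `T` to `T'` costs at most `ε * (1 + 3 * ‖T‖) * ‖u‖ ^ 2`,
while `‖u‖ / 2 ≤ ‖v‖` keeps `c / 4 * ‖u‖ ^ 2` of the lower bound. -/
theorem mul_norm_sq_le_inner_map_self_of_near {T T' : E →L[ℝ] E} {u v : E} {c ε k : ℝ}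
    (hε : ε ≤ 1 / 2) (hεc : ε * (1 + 3 * ‖T‖) ≤ c / 8) (hT' : ‖T' - T‖ ≤ ε)
    (huv : ‖u - v‖ ≤ ε * ‖u‖) (hv : c * ‖v‖ ^ 2 ≤ ⟪T v, v⟫ + k) :
    c / 8 * ‖u‖ ^ 2 ≤ ⟪T' u, u⟫ + k := by
  have hε0 : 0 ≤ ε := (norm_nonneg _).trans hT'
  have hc : 0 ≤ c := by nlinarith [norm_nonneg T]
  have hu := norm_nonneg u
  have hvlo : ‖u‖ / 2 ≤ ‖v‖ := by nlinarith [norm_sub_norm_le u v]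
  have hvhi : ‖v‖ ≤ 2 * ‖u‖ := by nlinarith [norm_sub_norm_le v u, norm_sub_rev u v]
  have hcv : c / 4 * ‖u‖ ^ 2 ≤ c * ‖v‖ ^ 2 := by
    have : (‖u‖ / 2) ^ 2 ≤ ‖v‖ ^ 2 := by gcongr
    nlinarith
  have hTT' := (abs_le.mp (abs_inner_map_self_sub_le_opNorm_sub_mul T T' u)).1
  have hTuv := (abs_le.mp (abs_inner_map_self_sub_inner_map_self_le T u v)).1
  have herr : ‖T' - T‖ * ‖u‖ ^ 2 + ‖T‖ * (‖u‖ + ‖v‖) * ‖u - v‖ ≤ c / 8 * ‖u‖ ^ 2 := by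
    calc ‖T' - T‖ * ‖u‖ ^ 2 + ‖T‖ * (‖u‖ + ‖v‖) * ‖u - v‖
        ≤ ε * ‖u‖ ^ 2 + ‖T‖ * (3 * ‖u‖) * (ε * ‖u‖) := by gcongr; linarith
      _ = ε * (1 + 3 * ‖T‖) * ‖u‖ ^ 2 := by ring
      _ ≤ c / 8 * ‖u‖ ^ 2 := by gcongr
  linarith

end InnerProductSpace

section CompleteSpace

variable {E : Type*} [NormedAddCommGroup E] [InnerProductSpace ℝ E] [CompleteSpace E]

theorem IsEssPos.exists_coercive_add_compact {B : E → E → ℝ} (h : IsEssPos B) :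
    ∃ c > 0, ∃ K : E →L[ℝ] E, (K : E →ₗ[ℝ] E).IsSymmetric ∧ IsCompactOperator K ∧
      ∀ x, c * ‖x‖ ^ 2 ≤ B x x + ⟪K x, x⟫ := by
  obtain ⟨P, K, hPsym, hPbij, hPpos, hKsym, hKc, hB⟩ := h
  have hP : P.IsPositive := (P.isPositive_iff).mpr ⟨hPsym, fun x => by
    rcases eq_or_ne x 0 with rfl | hx
    · simp
    · exact (hPpos x hx).le⟩
  obtain ⟨c, hc, hcoer⟩ := hP.exists_mul_norm_sq_le_of_bijective hPbij
  refine ⟨c, hc, -K, fun x y => by simp [hKsym x y], hKc.neg, fun x => ?_⟩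
  have := hcoer x
  simp only [hB, add_apply, neg_apply, inner_add_left, inner_neg_left]
  linarith

theorem isEssPos_of_coercive_add_compact {A K : E →L[ℝ] E} (hA : (A : E →ₗ[ℝ] E).IsSymmetric)
    (hK : (K : E →ₗ[ℝ] E).IsSymmetric) (hKc : IsCompactOperator K) {c : ℝ} (hc : 0 < c)
    (h : ∀ x, c * ‖x‖ ^ 2 ≤ ⟪A x, x⟫ + ⟪K x, x⟫) :
    IsEssPos fun x y => ⟪A x, y⟫ := by
  have hQ : ∀ x, c * ‖x‖ ^ 2 ≤ ⟪(A + K) x, x⟫ := by simpa [inner_add_left] using h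
  have hQbij : Function.Bijective (A + K) := by
    refine ContinuousLinearMap.isUnit_iff_bijective.mp <|
      (A + K).isUnit_of_forall_le_norm_inner_map (c := ⟨c, hc.le⟩) hc fun x => ?_
    rw [mul_comm]
    exact (hQ x).trans (Real.le_norm_self _)
  refine ⟨A + K, -K, fun x y => ?_, hQbij, fun x hx => ?_, fun x y => by simpa using hK x y,
    hKc.neg, fun x y => by simp⟩
  · simp only [add_apply, inner_add_left, inner_add_right]
    exact congrArg₂ (· + ·) (hA x y) (hK x y)
  · exact (hQ x).trans_lt' (by positivity)

end CompleteSpace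

section Subspace

variable {H : Type*} [NormedAddCommGroup H] [InnerProductSpace ℝ H]

theorem isEssPos_restrict_of_coercive_add_compact {V : Submodule ℝ H} [CompleteSpace V]
    {T : H →L[ℝ] H} (hT : (T : H →ₗ[ℝ] H).IsSymmetric) {K : V →L[ℝ] V}
    (hK : (K : V →ₗ[ℝ] V).IsSymmetric) (hKc : IsCompactOperator K) {c : ℝ} (hc : 0 < c)
    (h : ∀ x : V, c * ‖x‖ ^ 2 ≤ ⟪T x, (x : H)⟫ + ⟪K x, x⟫) :
    IsEssPos fun x y : V => ⟪T x, (y : H)⟫ := by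
  set A := V.orthogonalProjectionOnto ∘L T ∘L V.subtypeL
  have hA : ∀ x y : V, ⟪A x, y⟫ = ⟪T x, (y : H)⟫ := fun x y => by simp [A]
  have hAsym : (A : V →ₗ[ℝ] V).IsSymmetric := fun x y => by
    change ⟪A x, y⟫ = ⟪x, A y⟫
    rw [← real_inner_comm x, hA, hA]
    exact (hT x y).trans (real_inner_comm _ _)
  simpa only [hA] using isEssPos_of_coercive_add_compact hAsym hK hKc hc (by simpa only [hA])

theorem exists_coercive_add_compact_of_near {V W : Submodule ℝ H} [CompleteSpace V]
    [CompleteSpace W] {T T' : H →L[ℝ] H} {K : V →L[ℝ] V} (hK : (K : V →ₗ[ℝ] V).IsSymmetric)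
    (hKc : IsCompactOperator K) {c ε : ℝ} (hε : ε ≤ 1 / 2) (hεc : ε * (1 + 3 * ‖T‖) ≤ c / 8)
    (hcoer : ∀ x : V, c * ‖x‖ ^ 2 ≤ ⟪T x, (x : H)⟫ + ⟪K x, x⟫) (hT' : ‖T' - T‖ ≤ ε)
    (J : W →L[ℝ] V) (hJ : ∀ x : W, ‖(x : H) - J x‖ ≤ ε * ‖x‖) :
    ∃ K' : W →L[ℝ] W, (K' : W →ₗ[ℝ] W).IsSymmetric ∧ IsCompactOperator K' ∧
      ∀ x : W, c / 8 * ‖x‖ ^ 2 ≤ ⟪T' x, (x : H)⟫ + ⟪K' x, x⟫ := by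
  have hK' : ∀ x y : W, ⟪(J.adjoint ∘L K ∘L J) x, y⟫ = ⟪K (J x), J y⟫ := fun x y =>
    ContinuousLinearMap.adjoint_inner_left J y (K (J x))
  refine ⟨J.adjoint ∘L K ∘L J, fun x y => ?_, (hKc.comp_clm J).clm_comp J.adjoint, fun x => ?_⟩
  · change ⟪(J.adjoint ∘L K ∘L J) x, y⟫ = ⟪x, (J.adjoint ∘L K ∘L J) y⟫
    rw [← real_inner_comm x, hK', hK']
    exact (hK (J x) (J y)).trans (real_inner_comm _ _)
  · simpa only [hK', Submodule.coe_norm] using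
      mul_norm_sq_le_inner_map_self_of_near hε hεc hT' (hJ x) (hcoer (J x))

end Subspace

theorem stmt13_general {H : Type*} [NormedAddCommGroup H] [InnerProductSpace ℝ H] [CompleteSpace H]
    (T : H →L[ℝ] H)
    (P : H →L[ℝ] H) (hPproj : P ∘L P = P)
    (hess : IsEssPos (fun x y : LinearMap.range (P : H →ₗ[ℝ] H) => ⟪T (x : H), (y : H)⟫)) :
    ∃ ε > 0, ∀ T' P' : H →L[ℝ] H, (∀ x y : H, ⟪T' x, y⟫ = ⟪x, T' y⟫) →
      P' ∘L P' = P' → (∀ x y : H, ⟪P' x, y⟫ = ⟪x, P' y⟫) →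
      ‖T' - T‖ < ε → ‖P' - P‖ < ε →
      IsEssPos (fun x y : LinearMap.range (P' : H →ₗ[ℝ] H) => ⟪T' (x : H), (y : H)⟫) := by
  set V := LinearMap.range (P : H →ₗ[ℝ] H)
  have : CompleteSpace V :=
    (ContinuousLinearMap.IsIdempotentElem.isClosed_range hPproj).completeSpace_coe
  obtain ⟨c, hc, K, hK, hKc, hcoer⟩ := hess.exists_coercive_add_compact
  set ε := min (1 / 2) (c / (8 * (1 + 3 * ‖T‖)))
  have hεc : ε * (1 + 3 * ‖T‖) ≤ c / 8 := by
    rw [← le_div_iff₀ (by positivity), div_div]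
    exact min_le_right _ _
  refine ⟨ε, by positivity, fun T' P' hT' hP'proj _ hTT' hPP' => ?_⟩
  set W := LinearMap.range (P' : H →ₗ[ℝ] H)
  have hP' : IsIdempotentElem P' := hP'proj
  have : CompleteSpace W :=
    (ContinuousLinearMap.IsIdempotentElem.isClosed_range hP').completeSpace_coe
  let J : W →L[ℝ] V := (P ∘L W.subtypeL).codRestrict V fun x => ⟨_, rfl⟩
  have hJ (x : W) : ‖(x : H) - J x‖ ≤ ε * ‖x‖ := by
    have hx : P' x = x := (LinearMap.IsIdempotentElem.mem_range_iff
      (ContinuousLinearMap.IsIdempotentElem.toLinearMap hP')).mp x.2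
    calc ‖(x : H) - P x‖ = ‖(P' - P) x‖ := by rw [sub_apply, hx]
      _ ≤ ‖P' - P‖ * ‖x‖ := (P' - P).le_opNorm x
      _ ≤ ε * ‖x‖ := by gcongr
  obtain ⟨K', hK', hK'c, hcoer'⟩ :=
    exists_coercive_add_compact_of_near hK hKc (min_le_left _ _) hεc hcoer hTT'.le J hJ
  exact isEssPos_restrict_of_coercive_add_compact hT' hK' hK'c (by positivity) hcoer'

/-- the set of pairs `(B, V)` — a bounded symmetric bilinear form (given by
its representing self-adjoint operator `T`) and a closed subspace (given by its orthogonal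
projection `P`) — such that `B|_{V×V}` is essentially positive, is open: here openness is
expressed by the existence of `ε > 0` such that any nearby pair (in the operator norm for
`T` and in the gap metric, i.e. the operator norm of the difference of the orthogonal
projections, for `V`) still has essentially positive restriction. -/
theorem stmt13 {H : Type*} [NormedAddCommGroup H] [InnerProductSpace ℝ H] [CompleteSpace H]
    (T : H →L[ℝ] H) (hT : ∀ x y : H, ⟪T x, y⟫ = ⟪x, T y⟫)
    (P : H →L[ℝ] H) (hPproj : P ∘L P = P) (hPsa : ∀ x y : H, ⟪P x, y⟫ = ⟪x, P y⟫)
    (hess : IsEssPos (fun x y : LinearMap.range (P : H →ₗ[ℝ] H) => ⟪T (x : H), (y : H)⟫)) :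
    ∃ ε > 0, ∀ T' P' : H →L[ℝ] H, (∀ x y : H, ⟪T' x, y⟫ = ⟪x, T' y⟫) →
      P' ∘L P' = P' → (∀ x y : H, ⟪P' x, y⟫ = ⟪x, P' y⟫) →
      ‖T' - T‖ < ε → ‖P' - P‖ < ε →
      IsEssPos (fun x y : LinearMap.range (P' : H →ₗ[ℝ] H) => ⟪T' (x : H), (y : H)⟫) :=
  stmt13_general T P hPproj hess
end

section
/- Let (M,g) be a Lorentzian manifold, γ a geodesic in M, and Y a timelike Jacobi field along γ that is not admissible, i.e., Y'(0) = α Y(0) for some α ∈ ℝ. If γ is spacelike or lightlike, then there exist a, b ∈ ℝ (which may be taken arbitrarily small) such that the Jacobi field Ȳ(t) = Y(t) + (a + bt)γ̇(t) is timelike and admissible, i.e., Ȳ(0) and Ȳ'(0) are linearly independent. -/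
open Set Filter Topology

/-!
Since `Y 0` is timelike and `v` is causal and nonzero, `v` is not a multiple of `Y 0`. Hence
for `a = 0` and any `b ≠ 0` the vectors `Y 0` and `deriv Y 0 + b • v = α • Y 0 + b • v` are
linearly independent. Timelikeness is an open condition, uniform over the compact interval
`[0, 1]`, so it survives the perturbation `Y t + (b * t) • v` for all sufficiently small `b`.
-/

theorem linearIndependent_pair_of_neg_of_nonneg {K V : Type*} [Field K] [LinearOrder K]
    [IsStrictOrderedRing K] [AddCommGroup V] [Module K V] (g : V →ₗ[K] V →ₗ[K] K) {x v : V}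
    (hx : g x x < 0) (hv : v ≠ 0) (hvv : 0 ≤ g v v) : LinearIndependent K ![x, v] := by
  have hx0 : x ≠ 0 := by rintro rfl; simp at hx
  refine (LinearIndependent.pair_iff' hx0).2 fun c hc => ?_
  have hc0 : c ≠ 0 := by rintro rfl; exact hv (by simp [← hc])
  have hgv : g v v = c * c * g x x := by
    rw [← hc, map_smul, map_smul, LinearMap.smul_apply, smul_eq_mul, smul_eq_mul, mul_assoc]
  nlinarith [mul_self_pos.2 hc0]

theorem LinearIndependent.pair_smul_add_smul {K V : Type*} [Ring K] [NoZeroDivisors K]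
    [AddCommGroup V] [Module K V] {x v : V} (h : LinearIndependent K ![x, v]) (α : K) {b : K}
    (hb : b ≠ 0) : LinearIndependent K ![x, α • x + b • v] := by
  refine LinearIndependent.pair_iff.2 fun s t hst => ?_
  have hcoeff := LinearIndependent.pair_iff.1 h (s + t * α) (t * b) (by
    rw [← hst, smul_add, smul_smul, smul_smul, add_smul, add_assoc])
  have ht : t = 0 := (mul_eq_zero.1 hcoeff.2).resolve_right hb
  subst ht
  simpa using hcoeff.1

theorem IsCompact.eventually_forall_lt {X Y α : Type*} [TopologicalSpace X] [TopologicalSpace Y]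
    [TopologicalSpace α] [LinearOrder α] [OrderClosedTopology α] {K : Set Y} (hK : IsCompact K)
    {F : X → Y → α} (hF : Continuous (Function.uncurry F)) {x₀ : X} {c : α}
    (h₀ : ∀ y ∈ K, F x₀ y < c) : ∀ᶠ x in 𝓝 x₀, ∀ y ∈ K, F x y < c :=
  hK.eventually_forall_of_forall_eventually fun y hy =>
    hF.continuousAt.eventually_lt continuousAt_const (h₀ y hy)

theorem stmt18_general {n : ℕ} (g : (Fin n → ℝ) →ₗ[ℝ] (Fin n → ℝ) →ₗ[ℝ] ℝ)
    (v : Fin n → ℝ) (hv : v ≠ 0) (hcausal : 0 ≤ g v v)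
    (Y : ℝ → Fin n → ℝ) (hY1 : Differentiable ℝ Y)
    (htimelike : ∀ t ∈ Icc (0:ℝ) 1, g (Y t) (Y t) < 0)
    (α : ℝ) (hnotadm : deriv Y 0 = α • Y 0) :
    ∀ ε > 0, ∃ a' b' : ℝ, |a'| < ε ∧ |b'| < ε ∧
      (∀ t ∈ Icc (0:ℝ) 1,
        g (Y t + (a' + b' * t) • v) (Y t + (a' + b' * t) • v) < 0) ∧
      LinearIndependent ℝ ![Y 0 + a' • v, deriv Y 0 + b' • v] := by
  intro ε hε
  have hperturb : Continuous fun p : ℝ × ℝ =>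
      g (Y p.2 + (0 + p.1 * p.2) • v) (Y p.2 + (0 + p.1 * p.2) • v) := by
    have hY : Continuous Y := hY1.continuous
    simp_rw [← g.toContinuousBilinearMap_apply]
    fun_prop
  have htime : ∀ᶠ b in 𝓝 (0 : ℝ), ∀ t ∈ Icc (0:ℝ) 1,
      g (Y t + (0 + b * t) • v) (Y t + (0 + b * t) • v) < 0 :=
    isCompact_Icc.eventually_forall_lt hperturb (by simpa using htimelike)
  have hsmall : ∀ᶠ b in 𝓝 (0 : ℝ), |b| < ε :=
    (isOpen_lt continuous_abs continuous_const).mem_nhds (by simpa using hε)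
  obtain ⟨b, ⟨hbtime, hbε⟩, hb0⟩ :=
    (((htime.and hsmall).filter_mono nhdsWithin_le_nhds).and
      (self_mem_nhdsWithin : {b : ℝ | b ≠ 0} ∈ 𝓝[≠] 0)).exists
  refine ⟨0, b, by simpa using hε, hbε, hbtime, ?_⟩
  have hY0 := linearIndependent_pair_of_neg_of_nonneg g
    (htimelike 0 (left_mem_Icc.2 zero_le_one)) hv hcausal
  simpa [hnotadm] using hY0.pair_smul_add_smul α hb0

/-- STATEMENT 18 (perturbation to an admissible Jacobi field), formulated in the
Morse–Sturm reduction of the geometric setup: using a parallel orthonormal frame along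
the geodesic `γ`, the metric becomes a fixed nondegenerate symmetric bilinear form `g`
of index `1` on `ℝⁿ`, the velocity `γ̇` becomes a fixed nonzero vector `v` (parallel,
with `R(t) v = 0` since `γ̇` is a Jacobi field), and Jacobi fields become solutions of
`Y'' = R(t) Y` with `R(t)` `g`-symmetric. If the timelike Jacobi field `Y` is not
admissible (`Y'(0) = α Y(0)`) and `γ` is spacelike or lightlike (`g(v,v) ≥ 0`), then
there exist arbitrarily small `a, b ∈ ℝ` such that `Ȳ(t) = Y(t) + (a + b t) v` is
timelike on `[0,1]` and admissible, i.e. `Ȳ(0) = Y(0) + a v` and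
`Ȳ'(0) = Y'(0) + b v` are linearly independent. -/
theorem stmt18 {n : ℕ} (g : (Fin n → ℝ) →ₗ[ℝ] (Fin n → ℝ) →ₗ[ℝ] ℝ)
    (hsym : ∀ x y, g x y = g y x)
    (hnondeg : ∀ x, (∀ y, g x y = 0) → x = 0)
    (v : Fin n → ℝ) (hv : v ≠ 0) (hcausal : 0 ≤ g v v)
    (R : ℝ → (Fin n → ℝ) →ₗ[ℝ] (Fin n → ℝ))
    (hRsym : ∀ t x y, g (R t x) y = g x (R t y))
    (hRv : ∀ t, R t v = 0)
    (Y : ℝ → Fin n → ℝ) (hY1 : Differentiable ℝ Y) (hY2 : Differentiable ℝ (deriv Y))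
    (hJacobi : ∀ t, deriv (deriv Y) t = R t (Y t))
    (htimelike : ∀ t ∈ Icc (0:ℝ) 1, g (Y t) (Y t) < 0)
    (α : ℝ) (hnotadm : deriv Y 0 = α • Y 0) :
    ∀ ε > 0, ∃ a' b' : ℝ, |a'| < ε ∧ |b'| < ε ∧
      (∀ t ∈ Icc (0:ℝ) 1,
        g (Y t + (a' + b' * t) • v) (Y t + (a' + b' * t) • v) < 0) ∧
      LinearIndependent ℝ ![Y 0 + a' • v, deriv Y 0 + b' • v] :=
  stmt18_general g v hv hcausal Y hY1 htimelike α hnotadm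
end
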